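/- arXiv:1310.0726 — 5 statements merged into one kernel-verified Lean document; each statement's English description precedes it below -/
import Mathlib

section
/- Under the stated assumptions, for every real c < 0 one has liminf_{n → ∞} d_n(t_n + c·w_n) ≥ e^{−c}. -/
open Filter Real
open scoped ENNReal Topology

/-!
Put `s = t_n + c w_n`, so that `ρ_1 (t_n - s) = -c`. For `0 ≤ L < t_n` some index `i` has
`ρ_i L < log A_i`, so `A_i > 1` is the partial sum `a_1 + ⋯ + a_i` and `e^{ρ_i L} < A_i`.
Since `ρ_i L - ρ_j s ≥ ρ_1 (L - s)` for `j ≤ i`, the first `i` terms of `d_n(s)` already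
contribute at least `A_i e^{-ρ_i L} e^{ρ_1 (L - s)} ≥ e^{ρ_1 (L - s)}`. Letting `L ↑ t_n` gives
`d_n(s) ≥ e^{-c}` for every large `n`, not only in the limit.
-/

lemma mul_sub_le_mul_sub_mul {ρ₀ ρⱼ ρᵢ L s : ℝ} (h₀ⱼ : ρ₀ ≤ ρⱼ) (hⱼᵢ : ρⱼ ≤ ρᵢ) (hL : 0 ≤ L)
    (hsL : s ≤ L) : ρ₀ * (L - s) ≤ ρᵢ * L - ρⱼ * s := by
  rcases le_total s 0 with hs | hs <;> nlinarith

lemma exp_mul_lt_of_lt_log_max_div {S ρ L : ℝ} (hρ : 0 < ρ) (hL : 0 ≤ L)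
    (h : L < log (max 1 S) / ρ) : exp (ρ * L) < S := by
  have hlog : ρ * L < log (max 1 S) := by rwa [lt_div_iff₀ hρ, mul_comm] at h
  have hexp : exp (ρ * L) < max 1 S :=
    (lt_log_iff_exp_lt (lt_of_lt_of_le one_pos (le_max_left _ _))).mp hlog
  exact (lt_max_iff.mp hexp).resolve_left (not_lt.mpr (one_le_exp (by positivity)))

section DirichletSeries

variable {a ρ : ℕ → ℝ}

lemma exp_le_sum_range_mul_exp (ha : ∀ i, 0 ≤ a i) (hρ : Monotone ρ) {i : ℕ} {L s : ℝ}
    (hL : 0 ≤ L) (hsL : s ≤ L) (hi : exp (ρ i * L) ≤ ∑ j ∈ Finset.range (i + 1), a j) :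
    exp (ρ 0 * (L - s)) ≤ ∑ j ∈ Finset.range (i + 1), a j * exp (-(ρ j) * s) := by
  set k := ρ 0 * (L - s) - ρ i * L
  calc exp (ρ 0 * (L - s)) = exp (ρ i * L) * exp k := by rw [← exp_add, add_sub_cancel]
    _ ≤ (∑ j ∈ Finset.range (i + 1), a j) * exp k := by gcongr
    _ = ∑ j ∈ Finset.range (i + 1), a j * exp k := Finset.sum_mul ..
    _ ≤ ∑ j ∈ Finset.range (i + 1), a j * exp (-(ρ j) * s) := by
      gcongr with j hj
      · exact ha j
      have hji : j ≤ i := Nat.lt_succ_iff.mp (Finset.mem_range.mp hj)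
      linarith [mul_sub_le_mul_sub_mul (hρ j.zero_le) (hρ hji) hL hsL]

lemma ofReal_exp_le_tsum (ha : ∀ i, 0 ≤ a i) (hρ : Monotone ρ) {i : ℕ} {L s : ℝ}
    (hL : 0 ≤ L) (hsL : s ≤ L) (hi : exp (ρ i * L) ≤ ∑ j ∈ Finset.range (i + 1), a j) :
    ENNReal.ofReal (exp (ρ 0 * (L - s))) ≤ ∑' j, ENNReal.ofReal (a j * exp (-(ρ j) * s)) :=
  calc ENNReal.ofReal (exp (ρ 0 * (L - s)))
      ≤ ENNReal.ofReal (∑ j ∈ Finset.range (i + 1), a j * exp (-(ρ j) * s)) :=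
        ENNReal.ofReal_le_ofReal (exp_le_sum_range_mul_exp ha hρ hL hsL hi)
    _ = ∑ j ∈ Finset.range (i + 1), ENNReal.ofReal (a j * exp (-(ρ j) * s)) :=
        ENNReal.ofReal_sum_of_nonneg fun j _ => mul_nonneg (ha j) (exp_pos _).le
    _ ≤ _ := ENNReal.sum_le_tsum _

theorem ofReal_exp_le_tsum_of_isLUB (ha : ∀ i, 0 ≤ a i) (hρ₀ : 0 < ρ 0) (hρ : Monotone ρ)
    {t s : ℝ}
    (ht : IsLUB (Set.range fun i => log (max 1 (∑ j ∈ Finset.range (i + 1), a j)) / ρ i) t)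
    (htpos : 0 < t) (hst : s < t) :
    ENNReal.ofReal (exp (ρ 0 * (t - s))) ≤ ∑' j, ENNReal.ofReal (a j * exp (-(ρ j) * s)) := by
  have hcont : Continuous fun L => ENNReal.ofReal (exp (ρ 0 * (L - s))) :=
    ENNReal.continuous_ofReal.comp (by fun_prop)
  refine le_of_tendsto (hcont.continuousWithinAt.tendsto (s := Set.Iio t) (x := t)) ?_
  filter_upwards [Ioo_mem_nhdsLT (max_lt htpos hst)] with L ⟨hL, hLt⟩
  obtain ⟨_, ⟨i, rfl⟩, hLi, -⟩ := ht.exists_between hLt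
  have hρi : 0 < ρ i := hρ₀.trans_le (hρ i.zero_le)
  exact ofReal_exp_le_tsum ha hρ (le_of_max_le_left hL.le) (le_of_max_le_right hL.le)
    (exp_mul_lt_of_lt_log_max_div hρi (le_of_max_le_left hL.le) hLi).le

end DirichletSeries

/-- Indices are zero-based: Lean index `i` corresponds to paper index `i+1`. -/
theorem left_window_liminf_bound_general
    (a ρ : ℕ → ℕ → ℝ)
    (hρ_pos : ∀ n i, 0 < ρ n i)
    (hρ_mono : ∀ n, StrictMono (ρ n))
    (ha_nonneg : ∀ n i, 0 ≤ a n i)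
    (A : ℕ → ℕ → ℝ)
    (hA : ∀ n i, A n i = max 1 (∑ j ∈ Finset.range (i + 1), a n j))
    (d : ℕ → ℝ → ℝ≥0∞)
    (hd : ∀ n s, d n s = ∑' i, ENNReal.ofReal (a n i * Real.exp (-(ρ n i) * s)))
    (t w : ℕ → ℝ)
    (ht : ∀ᶠ n in atTop,
      IsLUB (Set.range fun i => Real.log (A n i) / ρ n i) (t n) ∧ 0 < t n)
    (hw : ∀ n, w n = 1 / ρ n 0) :
    ∀ c < (0 : ℝ), ENNReal.ofReal (Real.exp (-c)) ≤
      Filter.liminf (fun n => d n (t n + c * w n)) atTop := by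
  intro c hc
  refine le_liminf_of_le (by isBoundedDefault) ?_
  filter_upwards [ht] with n ⟨hlub, htpos⟩
  have hρ₀ := hρ_pos n 0
  have hshift : ρ n 0 * (t n - (t n + c * w n)) = -c := by rw [hw]; field_simp; ring
  have hst : t n + c * w n < t n := by
    rw [hw]; linarith [mul_neg_of_neg_of_pos hc (one_div_pos.mpr hρ₀)]
  simp only [hA] at hlub
  rw [hd, ← hshift]
  exact ofReal_exp_le_tsum_of_isLUB (ha_nonneg n) hρ₀ (hρ_mono n).monotone hlub htpos hst

/-- Theorem 2 of Barrera–Ycart, lower (left-window) bound: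
for every `c < 0`, `liminf_n d_n(t_n + c w_n) ≥ e^{-c}`.
Indices are zero-based: Lean index `i` corresponds to paper index `i+1`. -/
theorem left_window_liminf_bound
    (a ρ : ℕ → ℕ → ℝ)
    (hρ_pos : ∀ n i, 0 < ρ n i)
    (hρ_mono : ∀ n, StrictMono (ρ n))
    (ha_nonneg : ∀ n i, 0 ≤ a n i)
    (ha_pos : ∀ n, 0 < a n 0)
    (A : ℕ → ℕ → ℝ)
    (hA : ∀ n i, A n i = max 1 (∑ j ∈ Finset.range (i + 1), a n j))
    (d : ℕ → ℝ → ℝ≥0∞)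
    (hd : ∀ n s, d n s = ∑' i, ENNReal.ofReal (a n i * Real.exp (-(ρ n i) * s)))
    (t w r : ℕ → ℝ)
    (ht : ∀ᶠ n in atTop,
      IsLUB (Set.range fun i => Real.log (A n i) / ρ n i) (t n) ∧ 0 < t n)
    (hw : ∀ n, w n = 1 / ρ n 0)
    (hr : ∀ n, r n = w n * (Real.log (ρ n 0 * t n) - Real.log (Real.log (ρ n 0 * t n))))
    (hPeres : Tendsto (fun n => ρ n 0 * t n) atTop atTop)
    (hα : ∃ α > (0 : ℝ), ∀ᶠ n in atTop, ∀ i, a n (i + 1) ≤ α * A n i) :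
    ∀ c < (0 : ℝ), ENNReal.ofReal (Real.exp (-c)) ≤
      Filter.liminf (fun n => d n (t n + c * w n)) atTop :=
  left_window_liminf_bound_general a ρ hρ_pos hρ_mono ha_nonneg A hA d hd t w ht hw
end

section
/- Under the stated assumptions, for every real c > 0 one has limsup_{n → ∞} d_n(t_n + r_n + c·w_n) ≤ e^{−c}. -/
/-!
Write `s = t + u` and `Sᵢ = a₁ + ⋯ + aᵢ`. Since `t` dominates every `log Aᵢ / ρᵢ`, we have
`Sᵢ ≤ exp (ρᵢ t)`. Abel summation writes `d(s)` as `Σ Sᵢ (e^{-ρᵢ s} - e^{-ρᵢ₊₁ s})`, and by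
concavity of `x ↦ 1 - e^{-x}` each term is at most `(s/u) (e^{-ρᵢ u} - e^{-ρᵢ₊₁ u})`; the sum
telescopes to `d(s) ≤ (s/u) e^{-ρ₁ u}`. For the window `u = r + c w` one has
`ρ₁ u = log B - log log B + c` with `B = ρ₁ t → ∞`, and the bound becomes
`e^{-c} (log B / B + log B / (log B - log log B + c)) → e^{-c}`.
-/

open Filter Real Asymptotics
open scoped ENNReal Topology

lemma mul_one_sub_exp_neg_le {θ : ℝ} (hθ₀ : 0 ≤ θ) (hθ₁ : θ ≤ 1) (x : ℝ) :
    θ * (1 - exp (-x)) ≤ 1 - exp (-(θ * x)) := by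
  have h := convexOn_exp.2 (Set.mem_univ (-x)) (Set.mem_univ 0) hθ₀ (sub_nonneg.2 hθ₁)
    (add_sub_cancel θ 1)
  simp only [smul_eq_mul, mul_zero, add_zero, exp_zero, mul_one] at h
  rw [mul_neg] at h; linarith

lemma mul_exp_sub_exp_le {S x y t u : ℝ} (hS : S ≤ exp (x * t)) (hxy : x ≤ y) (ht : 0 ≤ t)
    (hu : 0 < u) :
    S * (exp (-x * (t + u)) - exp (-y * (t + u))) ≤
      (t + u) / u * (exp (-x * u) - exp (-y * u)) := by
  have hs : 0 < t + u := by linarith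
  have hθ := mul_one_sub_exp_neg_le (div_nonneg hu.le hs.le) ((div_le_one hs).2 (by linarith))
    ((y - x) * (t + u))
  rw [show u / (t + u) * ((y - x) * (t + u)) = (y - x) * u by field_simp] at hθ
  rw [div_mul_eq_mul_div, div_le_iff₀ hs] at hθ
  calc S * (exp (-x * (t + u)) - exp (-y * (t + u)))
      ≤ exp (x * t) * (exp (-x * (t + u)) - exp (-y * (t + u))) := by
        refine mul_le_mul_of_nonneg_right hS (sub_nonneg.2 (exp_le_exp.2 ?_))
        nlinarith
    _ = exp (-x * u) * (1 - exp (-((y - x) * (t + u)))) := by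
        simp only [mul_sub, ← exp_add]; ring_nf
    _ ≤ exp (-x * u) * ((t + u) / u * (1 - exp (-((y - x) * u)))) := by
        gcongr
        rw [div_mul_eq_mul_div, le_div_iff₀ hu]
        linarith
    _ = (t + u) / u * (exp (-x * u) - exp (-y * u)) := by
        rw [← show exp (-x * u) * exp (-((y - x) * u)) = exp (-y * u) by rw [← exp_add]; ring_nf]
        ring

lemma sum_range_mul_exp_le {a ρ : ℕ → ℝ} (hρ : Monotone ρ) {t u : ℝ} (ht : 0 ≤ t) (hu : 0 < u)
    (hS : ∀ i, ∑ j ∈ Finset.range (i + 1), a j ≤ exp (ρ i * t)) (N : ℕ) :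
    ∑ i ∈ Finset.range N, a i * exp (-ρ i * (t + u)) ≤ (t + u) / u * exp (-ρ 0 * u) := by
  have hsu : 1 ≤ (t + u) / u := (one_le_div hu).2 (by linarith)
  have abel : ∀ N, ∑ i ∈ Finset.range (N + 1), a i * exp (-ρ i * (t + u)) ≤
      (∑ j ∈ Finset.range (N + 1), a j) * exp (-ρ N * (t + u)) +
        (t + u) / u * (exp (-ρ 0 * u) - exp (-ρ N * u)) := by
    intro N
    induction N with
    | zero => simp
    | succ N ih =>
      have step := mul_exp_sub_exp_le (hS N) (hρ N.le_succ) ht hu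
      rw [Finset.sum_range_succ, Finset.sum_range_succ (f := a)]
      linarith
  cases N with
  | zero => simp only [Finset.range_zero, Finset.sum_empty]; positivity
  | succ N =>
    have tail : (∑ j ∈ Finset.range (N + 1), a j) * exp (-ρ N * (t + u)) ≤ exp (-ρ N * u) :=
      calc (∑ j ∈ Finset.range (N + 1), a j) * exp (-ρ N * (t + u))
          ≤ exp (ρ N * t) * exp (-ρ N * (t + u)) := by gcongr; exact hS N
        _ = exp (-ρ N * u) := by rw [← exp_add]; ring_nf
    have := abel N
    nlinarith [exp_pos (-ρ N * u)]

lemma tsum_ofReal_mul_exp_le {a ρ : ℕ → ℝ} (ha : ∀ i, 0 ≤ a i) (hρ : Monotone ρ) {t u : ℝ}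
    (ht : 0 ≤ t) (hu : 0 < u) (hS : ∀ i, ∑ j ∈ Finset.range (i + 1), a j ≤ exp (ρ i * t)) :
    ∑' i, ENNReal.ofReal (a i * exp (-ρ i * (t + u))) ≤
      ENNReal.ofReal ((t + u) / u * exp (-ρ 0 * u)) :=
  ENNReal.tsum_le_of_sum_range_le fun N => by
    rw [← ENNReal.ofReal_sum_of_nonneg fun i _ => mul_nonneg (ha i) (exp_nonneg _)]
    exact ENNReal.ofReal_le_ofReal (sum_range_mul_exp_le hρ ht hu hS N)

lemma le_exp_mul_of_log_max_div_le {S ρ t : ℝ} (hρ : 0 < ρ) (h : log (max 1 S) / ρ ≤ t) :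
    S ≤ exp (ρ * t) :=
  calc S ≤ max 1 S := le_max_right _ _
    _ = exp (log (max 1 S)) := (exp_log (lt_max_of_lt_left one_pos)).symm
    _ ≤ exp (ρ * t) := exp_le_exp.2 (by rwa [div_le_iff₀ hρ, mul_comm] at h)

noncomputable def windowShift (c B : ℝ) : ℝ := log B - log (log B) + c

lemma windowShift_pos {c B : ℝ} (hc : -1 < c) (hB : 1 < B) : 0 < windowShift c B := by
  have := log_le_sub_one_of_pos (log_pos hB)
  unfold windowShift; linarith

lemma exp_neg_windowShift (c : ℝ) {B : ℝ} (hB : 1 < B) :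
    exp (-windowShift c B) = exp (-c) * (log B / B) := by
  rw [windowShift, show -(log B - log (log B) + c) = -c + (log (log B) - log B) by ring,
    exp_add, exp_sub, exp_log (log_pos hB), exp_log (by linarith)]

lemma windowShift_isEquivalent_log (c : ℝ) : windowShift c ~[atTop] log := by
  have hloglog : (fun B => log (log B)) =o[atTop] log :=
    isLittleO_log_id_atTop.comp_tendsto tendsto_log_atTop
  exact (IsEquivalent.refl.sub_isLittleO hloglog).add_const_of_norm_tendsto_atTop
    (tendsto_norm_atTop_atTop.comp tendsto_log_atTop)

noncomputable def windowBound (c B : ℝ) : ℝ :=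
  (B + windowShift c B) / windowShift c B * exp (-windowShift c B)

lemma tendsto_windowBound (c : ℝ) : Tendsto (windowBound c) atTop (𝓝 (exp (-c))) := by
  have hequiv := windowShift_isEquivalent_log c
  have hne : ∀ᶠ B in atTop, windowShift c B ≠ 0 :=
    (hequiv.symm.tendsto_atTop tendsto_log_atTop).eventually_ne_atTop 0
  have hlog : Tendsto (fun B => log B / B) atTop (𝓝 0) := by
    simpa using isLittleO_log_id_atTop.tendsto_div_nhds_zero
  have hshift : Tendsto (fun B => log B / windowShift c B) atTop (𝓝 1) :=
    (isEquivalent_iff_tendsto_one hne).1 hequiv.symm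
  have := (hlog.add hshift).const_mul (exp (-c))
  rw [zero_add, mul_one] at this
  refine this.congr' ?_
  filter_upwards [eventually_gt_atTop 1, hne] with B hB hL
  rw [windowBound, exp_neg_windowShift c hB]
  field_simp
  ring

/-- Indices are zero-based: Lean index `i` is the paper's index `i + 1`. -/
theorem right_window_limsup_bound_general
    (a ρ : ℕ → ℕ → ℝ)
    (hρ_pos : ∀ n i, 0 < ρ n i)
    (hρ_mono : ∀ n, StrictMono (ρ n))
    (ha_nonneg : ∀ n i, 0 ≤ a n i)
    (A : ℕ → ℕ → ℝ)
    (hA : ∀ n i, A n i = max 1 (∑ j ∈ Finset.range (i + 1), a n j))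
    (d : ℕ → ℝ → ℝ≥0∞)
    (hd : ∀ n s, d n s = ∑' i, ENNReal.ofReal (a n i * Real.exp (-(ρ n i) * s)))
    (t w r : ℕ → ℝ)
    (ht : ∀ᶠ n in atTop,
      IsLUB (Set.range fun i => Real.log (A n i) / ρ n i) (t n) ∧ 0 < t n)
    (hw : ∀ n, w n = 1 / ρ n 0)
    (hr : ∀ n, r n = w n * (Real.log (ρ n 0 * t n) - Real.log (Real.log (ρ n 0 * t n))))
    (hPeres : Tendsto (fun n => ρ n 0 * t n) atTop atTop) :
    ∀ c > (0 : ℝ), Filter.limsup (fun n => d n (t n + r n + c * w n)) atTop ≤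
      ENNReal.ofReal (Real.exp (-c)) := by
  intro c hc
  have hbound : ∀ᶠ n in atTop,
      d n (t n + r n + c * w n) ≤ ENNReal.ofReal (windowBound c (ρ n 0 * t n)) := by
    filter_upwards [ht, hPeres.eventually_gt_atTop 1] with n ⟨hlub, htpos⟩ hB
    have hρ₀ := hρ_pos n 0
    set L := windowShift c (ρ n 0 * t n) with hL_def
    have hL : 0 < L := windowShift_pos (by linarith) hB
    have hS : ∀ i, ∑ j ∈ Finset.range (i + 1), a n j ≤ exp (ρ n i * t n) := fun i =>
      le_exp_mul_of_log_max_div_le (hρ_pos n i) (hA n i ▸ hlub.1 ⟨i, rfl⟩)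
    have hshift : t n + r n + c * w n = t n + L / ρ n 0 := by
      rw [hr, hw, hL_def, windowShift]; ring
    have hrescale : (t n + L / ρ n 0) / (L / ρ n 0) * exp (-ρ n 0 * (L / ρ n 0)) =
        (ρ n 0 * t n + L) / L * exp (-L) := by
      field_simp
    rw [hd, hshift, windowBound, ← hL_def, ← hrescale]
    exact tsum_ofReal_mul_exp_le (ha_nonneg n) (hρ_mono n).monotone htpos.le (div_pos hL hρ₀) hS
  calc Filter.limsup (fun n => d n (t n + r n + c * w n)) atTop
      ≤ Filter.limsup (fun n => ENNReal.ofReal (windowBound c (ρ n 0 * t n))) atTop :=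
        limsup_le_limsup hbound
    _ = ENNReal.ofReal (exp (-c)) :=
        (ENNReal.tendsto_ofReal ((tendsto_windowBound c).comp hPeres)).limsup_eq

/-- Theorem 2 of Barrera–Ycart, upper (right-window) bound:
for every `c > 0`, `limsup_n d_n(t_n + r_n + c w_n) ≤ e^{-c}`.
Indices are zero-based: Lean index `i` corresponds to paper index `i+1`. -/
theorem right_window_limsup_bound
    (a ρ : ℕ → ℕ → ℝ)
    (hρ_pos : ∀ n i, 0 < ρ n i)
    (hρ_mono : ∀ n, StrictMono (ρ n))
    (ha_nonneg : ∀ n i, 0 ≤ a n i)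
    (ha_pos : ∀ n, 0 < a n 0)
    (A : ℕ → ℕ → ℝ)
    (hA : ∀ n i, A n i = max 1 (∑ j ∈ Finset.range (i + 1), a n j))
    (d : ℕ → ℝ → ℝ≥0∞)
    (hd : ∀ n s, d n s = ∑' i, ENNReal.ofReal (a n i * Real.exp (-(ρ n i) * s)))
    (t w r : ℕ → ℝ)
    (ht : ∀ᶠ n in atTop,
      IsLUB (Set.range fun i => Real.log (A n i) / ρ n i) (t n) ∧ 0 < t n)
    (hw : ∀ n, w n = 1 / ρ n 0)
    (hr : ∀ n, r n = w n * (Real.log (ρ n 0 * t n) - Real.log (Real.log (ρ n 0 * t n))))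
    (hPeres : Tendsto (fun n => ρ n 0 * t n) atTop atTop)
    (hα : ∃ α > (0 : ℝ), ∀ᶠ n in atTop, ∀ i, a n (i + 1) ≤ α * A n i) :
    ∀ c > (0 : ℝ), Filter.limsup (fun n => d n (t n + r n + c * w n)) atTop ≤
      ENNReal.ofReal (Real.exp (-c)) :=
  right_window_limsup_bound_general a ρ hρ_pos hρ_mono ha_nonneg A hA d hd t w r ht hw hr hPeres
end

section
/- Fix n and suppose the supremum defining t_n satisfies 0 < t_n < ∞. Let c < 0 and let ε be a real with 0 < ε < −c, and assume t_n + c·w_n > 0. Then d_n(t_n + c·w_n) ≥ e^{−c−ε}. -/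
/-!
Put `t = t_n + c w` and `s = t_n - ε w`, so that `ρ₁ (s - t) = -c - ε` and `s > t > 0`.
Since `s < t_n`, some index `i` has `log A_i / ρ_i > s`, i.e. `e^{ρ_i s} < A_i`; as `e^{ρ_i s} > 1`,
`A_i` is the partial sum `a_1 + ⋯ + a_i` itself. Because the `ρ_j` increase, the first `i` terms of
`d_n(t)` are at least `(a_1 + ⋯ + a_i) e^{-ρ_i t} > e^{ρ_i (s - t)} ≥ e^{ρ_1 (s - t)} = e^{-c-ε}`.
In Lean the sequences are indexed from `0`, so `ρ₁` is `ρ 0`.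
-/

open Real

open Finset in
theorem sum_mul_exp_le_sum_mul_exp {a ρ : ℕ → ℝ} (ha : ∀ j, 0 ≤ a j) (hρ : Monotone ρ)
    {t : ℝ} (ht : 0 ≤ t) (i : ℕ) :
    (∑ j ∈ range (i + 1), a j) * exp (-ρ i * t) ≤ ∑ j ∈ range (i + 1), a j * exp (-ρ j * t) := by
  rw [sum_mul]
  refine sum_le_sum fun j hj => mul_le_mul_of_nonneg_left (exp_le_exp.mpr ?_) (ha j)
  have hji : ρ j ≤ ρ i := hρ (Nat.lt_succ_iff.mp (mem_range.mp hj))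
  nlinarith

theorem ofReal_sum_le_tsum {α : Type*} {f : α → ℝ} (hf : ∀ j, 0 ≤ f j) (s : Finset α) :
    ENNReal.ofReal (∑ j ∈ s, f j) ≤ ∑' j, ENNReal.ofReal (f j) := by
  rw [ENNReal.ofReal_sum_of_nonneg fun j _ => hf j]
  exact ENNReal.sum_le_tsum s

theorem ofReal_exp_le_tsum_of_exp_lt_sum {a ρ : ℕ → ℝ} (ha : ∀ j, 0 ≤ a j) (hρ : Monotone ρ)
    {s t : ℝ} (ht : 0 ≤ t) {i : ℕ} (hi : exp (ρ i * s) < ∑ j ∈ Finset.range (i + 1), a j) :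
    ENNReal.ofReal (exp (ρ i * (s - t))) ≤ ∑' j, ENNReal.ofReal (a j * exp (-ρ j * t)) := by
  have hsum : exp (ρ i * (s - t)) ≤ ∑ j ∈ Finset.range (i + 1), a j * exp (-ρ j * t) :=
    calc exp (ρ i * (s - t)) = exp (ρ i * s) * exp (-ρ i * t) := by rw [← exp_add]; ring_nf
      _ ≤ (∑ j ∈ Finset.range (i + 1), a j) * exp (-ρ i * t) :=
        mul_le_mul_of_nonneg_right hi.le (exp_nonneg _)
      _ ≤ _ := sum_mul_exp_le_sum_mul_exp ha hρ ht i
  exact (ENNReal.ofReal_le_ofReal hsum).trans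
    (ofReal_sum_le_tsum (fun j => mul_nonneg (ha j) (exp_nonneg _)) _)

theorem exists_exp_mul_lt_of_lt_isLUB {A ρ : ℕ → ℝ} (hA : ∀ i, 0 < A i) (hρ : ∀ i, 0 < ρ i)
    {tn s : ℝ} (htn : IsLUB (Set.range fun i => log (A i) / ρ i) tn) (hs : s < tn) :
    ∃ i, exp (ρ i * s) < A i := by
  obtain ⟨_, ⟨i, rfl⟩, hi, -⟩ := htn.exists_between hs
  refine ⟨i, ?_⟩
  rwa [lt_div_iff₀ (hρ i), mul_comm, ← exp_lt_exp, exp_log (hA i)] at hi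

theorem fixed_n_lower_bound_general
    (a ρ : ℕ → ℝ)
    (hρ_pos : ∀ i, 0 < ρ i)
    (hρ_mono : StrictMono ρ)
    (ha_nonneg : ∀ i, 0 ≤ a i)
    (A : ℕ → ℝ)
    (hA : ∀ i, A i = max 1 (∑ j ∈ Finset.range (i + 1), a j))
    (tn : ℝ)
    (htn : IsLUB (Set.range fun i => Real.log (A i) / ρ i) tn)
    (w : ℝ) (hw : w = 1 / ρ 0)
    (c ε : ℝ) (hε : 0 < ε) (hεc : ε < -c)
    (hpos : 0 < tn + c * w) :
    ENNReal.ofReal (Real.exp (-c - ε)) ≤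
      ∑' i, ENNReal.ofReal (a i * Real.exp (-(ρ i) * (tn + c * w))) := by
  have hw_pos : 0 < w := by rw [hw]; exact one_div_pos.mpr (hρ_pos 0)
  have hρw : ρ 0 * w = 1 := by rw [hw]; field_simp [(hρ_pos 0).ne']
  set s := tn - ε * w
  set t := tn + c * w
  have hts : 0 ≤ s - t := by nlinarith
  obtain ⟨i, hi⟩ := exists_exp_mul_lt_of_lt_isLUB (fun i => (hA i).symm ▸ lt_max_of_lt_left one_pos)
    hρ_pos htn (show s < tn by nlinarith)
  have hi_sum : exp (ρ i * s) < ∑ j ∈ Finset.range (i + 1), a j := by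
    have h1 : 1 ≤ exp (ρ i * s) := one_le_exp (by nlinarith [hρ_pos i])
    rw [hA, lt_max_iff] at hi
    exact hi.resolve_left h1.not_gt
  refine le_trans (ENNReal.ofReal_le_ofReal ?_)
    (ofReal_exp_le_tsum_of_exp_lt_sum ha_nonneg hρ_mono.monotone hpos.le hi_sum)
  have hexp : -c - ε = ρ 0 * (s - t) := by linear_combination (-c - ε) * hρw.symm
  rw [hexp, exp_le_exp]
  exact mul_le_mul_of_nonneg_right (hρ_mono.monotone (Nat.zero_le i)) hts

/-- Fixed-`n` lower bound from the proof of (7) in Barrera–Ycart: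
if `t_n = sup_i log(A_i)/ρ_i ∈ (0, ∞)`, `w = 1/ρ_1`, `c < 0`, `0 < ε < -c`
and `t_n + c w > 0`, then `d_n(t_n + c w) ≥ e^{-c-ε}`.
Indices are zero-based: Lean index `i` corresponds to paper index `i+1`. -/
theorem fixed_n_lower_bound
    (a ρ : ℕ → ℝ)
    (hρ_pos : ∀ i, 0 < ρ i)
    (hρ_mono : StrictMono ρ)
    (ha_nonneg : ∀ i, 0 ≤ a i)
    (ha_pos : 0 < a 0)
    (A : ℕ → ℝ)
    (hA : ∀ i, A i = max 1 (∑ j ∈ Finset.range (i + 1), a j))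
    (tn : ℝ)
    (htn : IsLUB (Set.range fun i => Real.log (A i) / ρ i) tn)
    (htn_pos : 0 < tn)
    (w : ℝ) (hw : w = 1 / ρ 0)
    (c ε : ℝ) (hc : c < 0) (hε : 0 < ε) (hεc : ε < -c)
    (hpos : 0 < tn + c * w) :
    ENNReal.ofReal (Real.exp (-c - ε)) ≤
      ∑' i, ENNReal.ofReal (a i * Real.exp (-(ρ i) * (tn + c * w))) :=
  fixed_n_lower_bound_general a ρ hρ_pos hρ_mono ha_nonneg A hA tn htn w hw c ε hε hεc hpos
end

section
/- Fix n, let l ≥ 1 be an index with a_1 + ⋯ + a_l ≥ 1 (so that A_i equals the true partial sum for all i ≥ l), suppose log(A_i)/ρ_i ≤ t for all i, where t > 0, and let s > 0. Then Σ_{i=l+1}^∞ a_i e^{−ρ_i (t+s)} ≤ (t/s) · A_l^{−s/t}. -/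
open Real

/-!
With `p = s/t`, the hypothesis `log A_i ≤ t ρ_i` gives `a_i e^{-ρ_i (t+s)} ≤ a_i A_i^{-(1+p)}`.
For `i > l` the weight `a_i` is the increment `A_i - A_{i-1}`, so the tail is a lower Riemann sum
of `x^{-(1+p)}` on `[A_l, ∞)`: each summand is at most `(A_{i-1}^{-p} - A_i^{-p}) / p`, and these
telescope to at most `A_l^{-p} / p`.
-/

/-- The lower Riemann rectangle of `x ^ (-(1 + p))` on `[u, v]` has area at most the integral. -/
lemma sub_mul_rpow_neg_one_add_le {p u v : ℝ} (hp : 0 < p) (hu : 0 < u) (huv : u ≤ v) :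
    (v - u) * v ^ (-(1 + p)) ≤ (u ^ (-p) - v ^ (-p)) / p := by
  have hv : 0 < v := hu.trans_le huv
  -- `(v/u)^p - 1 ≥ p log (v/u) ≥ p (1 - u/v)` replaces the integral by two tangent-line bounds.
  have hvu : 0 < v / u := div_pos hv hu
  have hlog : 1 - u / v ≤ log (v / u) := by
    simpa using one_sub_inv_le_log_of_pos hvu
  have hbernoulli : 1 + p * log (v / u) ≤ (v / u) ^ p := by
    rw [rpow_def_of_pos hvu]
    linarith [add_one_le_exp (log (v / u) * p)]
  have hu_split : u ^ (-p) = v ^ (-p) * (v / u) ^ p := by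
    rw [div_rpow hv.le hu.le, rpow_neg hu.le, rpow_neg hv.le]
    field_simp
  have hv_split : v ^ (-(1 + p)) = v ^ (-p) / v := by
    rw [show -(1 + p) = -p - 1 by ring, rpow_sub_one hv.ne']
  rw [hv_split, hu_split, le_div_iff₀ hp]
  calc (v - u) * (v ^ (-p) / v) * p = v ^ (-p) * (p * (1 - u / v)) := by
        field_simp
    _ ≤ v ^ (-p) * ((v / u) ^ p - 1) := by
        gcongr
        nlinarith
    _ = v ^ (-p) * (v / u) ^ p - v ^ (-p) := by ring

lemma sum_range_sub_mul_rpow_neg_one_add_le {p : ℝ} (hp : 0 < p) {B : ℕ → ℝ}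
    (hB_pos : ∀ k, 0 < B k) (hB_le : ∀ k, B k ≤ B (k + 1)) (n : ℕ) :
    ∑ k ∈ Finset.range n, (B (k + 1) - B k) * B (k + 1) ^ (-(1 + p)) ≤ B 0 ^ (-p) / p := by
  calc ∑ k ∈ Finset.range n, (B (k + 1) - B k) * B (k + 1) ^ (-(1 + p))
      ≤ ∑ k ∈ Finset.range n, (B k ^ (-p) - B (k + 1) ^ (-p)) / p :=
        Finset.sum_le_sum fun k _ => sub_mul_rpow_neg_one_add_le hp (hB_pos k) (hB_le k)
    _ = (B 0 ^ (-p) - B n ^ (-p)) / p := by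
        rw [← Finset.sum_div, Finset.sum_range_sub' (fun k => B k ^ (-p))]
    _ ≤ B 0 ^ (-p) / p := by
        gcongr
        exact sub_le_self _ (rpow_nonneg (hB_pos n).le _)

lemma exp_neg_mul_add_le_rpow {x ρ t s : ℝ} (hx : 0 < x) (ht : 0 < t) (hs : 0 ≤ s)
    (hlog : log x ≤ t * ρ) : exp (-ρ * (t + s)) ≤ x ^ (-(1 + s / t)) := by
  rw [rpow_def_of_pos hx, exp_le_exp, show -ρ * (t + s) = t * ρ * -(1 + s / t) by field_simp]
  have : 0 ≤ 1 + s / t := by positivity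
  nlinarith

lemma max_one_sum_range_eq {a : ℕ → ℝ} (ha : ∀ i, 0 ≤ a i) {l k : ℕ} (hlk : l ≤ k)
    (hl : 1 ≤ ∑ j ∈ Finset.range l, a j) :
    max 1 (∑ j ∈ Finset.range k, a j) = ∑ j ∈ Finset.range k, a j :=
  max_eq_right <| hl.trans <| Finset.sum_le_sum_of_subset_of_nonneg
    (Finset.range_subset_range.mpr hlk) fun i _ _ => ha i

-- Indices are zero-based: `a i`, `ρ i` are the paper's `a_{i+1}`, `ρ_{i+1}`, but `A k` is `A_k`.
theorem riemann_tail_bound_general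
    (a ρ : ℕ → ℝ)
    (hρ_pos : ∀ i, 0 < ρ i)
    (ha_nonneg : ∀ i, 0 ≤ a i)
    (A : ℕ → ℝ)
    (hA : ∀ k, A k = max 1 (∑ j ∈ Finset.range k, a j))
    (l : ℕ)
    (hl1 : 1 ≤ ∑ j ∈ Finset.range l, a j)
    (t : ℝ) (ht : 0 < t)
    (hle : ∀ i, Real.log (A (i + 1)) / ρ i ≤ t)
    (s : ℝ) (hs : 0 < s) :
    ∑' k : ℕ, ENNReal.ofReal (a (l + k) * Real.exp (-(ρ (l + k)) * (t + s))) ≤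
      ENNReal.ofReal (t / s * A l ^ (-(s / t))) := by
  have hA_pos : ∀ k, 0 < A k := fun k => one_pos.trans_le (hA k ▸ le_max_left _ _)
  have hA_step : ∀ k, A (l + k + 1) - A (l + k) = a (l + k) := fun k => by
    rw [hA, hA, max_one_sum_range_eq ha_nonneg (by omega) hl1,
      max_one_sum_range_eq ha_nonneg (by omega) hl1, Finset.sum_range_succ, add_sub_cancel_left]
  have hterm : ∀ k, a (l + k) * exp (-ρ (l + k) * (t + s)) ≤
      (A (l + k + 1) - A (l + k)) * A (l + k + 1) ^ (-(1 + s / t)) := fun k => by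
    rw [hA_step]
    refine mul_le_mul_of_nonneg_left (exp_neg_mul_add_le_rpow (hA_pos _) ht hs.le ?_) (ha_nonneg _)
    exact (div_le_iff₀ (hρ_pos _)).mp (hle _)
  refine ENNReal.tsum_le_of_sum_range_le fun n => ?_
  rw [← ENNReal.ofReal_sum_of_nonneg fun k _ => mul_nonneg (ha_nonneg _) (exp_nonneg _)]
  refine ENNReal.ofReal_le_ofReal ?_
  calc ∑ k ∈ Finset.range n, a (l + k) * exp (-ρ (l + k) * (t + s))
      ≤ ∑ k ∈ Finset.range n, (A (l + k + 1) - A (l + k)) * A (l + k + 1) ^ (-(1 + s / t)) :=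
        Finset.sum_le_sum fun k _ => hterm k
    _ ≤ A l ^ (-(s / t)) / (s / t) :=
        sum_range_sub_mul_rpow_neg_one_add_le (B := fun k => A (l + k)) (div_pos hs ht)
          (fun _ => hA_pos _)
          (fun k => show A (l + k) ≤ A (l + k + 1) by linarith [hA_step k, ha_nonneg (l + k)]) n
    _ = t / s * A l ^ (-(s / t)) := by rw [div_eq_inv_mul, inv_div]

/-- Riemann-sum tail bound from the proof of (8) in Barrera–Ycart:
if `A_i = max{1, a_1 + ⋯ + a_i}`, `a_1 + ⋯ + a_l ≥ 1` for some `l ≥ 1`,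
`log(A_i)/ρ_i ≤ t` for all `i`, `t > 0` and `s > 0`, then
`Σ_{i=l+1}^∞ a_i e^{-ρ_i (t+s)} ≤ (t/s) A_l^{-s/t}`.
Here `a`, `ρ` are zero-based (Lean index `i` is paper index `i+1`), while
`A k = max 1 (a 0 + ⋯ + a (k-1))` is the paper's `A_k`; the paper tail sum
`Σ_{i=l+1}^∞` is `∑' k : ℕ` over the terms of Lean index `l + k`. -/
theorem riemann_tail_bound
    (a ρ : ℕ → ℝ)
    (hρ_pos : ∀ i, 0 < ρ i)
    (hρ_mono : StrictMono ρ)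
    (ha_nonneg : ∀ i, 0 ≤ a i)
    (A : ℕ → ℝ)
    (hA : ∀ k, A k = max 1 (∑ j ∈ Finset.range k, a j))
    (l : ℕ) (hl : 1 ≤ l)
    (hl1 : 1 ≤ ∑ j ∈ Finset.range l, a j)
    (t : ℝ) (ht : 0 < t)
    (hle : ∀ i, Real.log (A (i + 1)) / ρ i ≤ t)
    (s : ℝ) (hs : 0 < s) :
    ∑' k : ℕ, ENNReal.ofReal (a (l + k) * Real.exp (-(ρ (l + k)) * (t + s))) ≤
      ENNReal.ofReal (t / s * A l ^ (-(s / t))) :=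
  riemann_tail_bound_general a ρ hρ_pos ha_nonneg A hA l hl1 t ht hle s hs
end

section
/- Assume that the (possibly infinite) limit γ = lim_{n → ∞} (1 − β_n)·ℓ_n exists in [0, +∞]. Then for every real c, lim_{n → ∞} d_n(t_n + (1 − β_n)·r_n + c·w_n) = e^{−c}·(1 + e^{−γ}) (with the convention e^{−∞} = 0). -/
open Filter Real
open scoped ENNReal Topology

/-- `ℓ_n = log(n / log n)`. -/
noncomputable def ell (n : ℕ) : ℝ := Real.log (n / Real.log n)

/-- Distance to equilibrium of the Ornstein–Uhlenbeck example of Barrera–Ycart: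
`d_n(t) = Σ_{i=1}^{9^n} a_{i,n} e^{-ρ_{i,n} t}` with `a_{1,n} = e^n`,
`ρ_{1,n} = n/(1 + (β_n/n) ℓ_n)`, and for `2 ≤ i ≤ 9^n`:
`a_{i,n} = e^{-n}`, `ρ_{i,n} = log(e^n + (i-1) e^{-n})`. -/
noncomputable def dCut (β : ℕ → ℝ) (n : ℕ) (t : ℝ) : ℝ :=
  Real.exp n * Real.exp (-((n : ℝ) / (1 + β n / n * ell n)) * t) +
    ∑ i ∈ Finset.Icc (2 : ℕ) (9 ^ n),
      Real.exp (-(n : ℝ)) *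
        Real.exp (-Real.log (Real.exp n + ((i : ℝ) - 1) * Real.exp (-(n : ℝ))) * t)

/-- Cutoff location `t_n = 1 + β_n ℓ_n / n`. -/
noncomputable def cutT (β : ℕ → ℝ) (n : ℕ) : ℝ := 1 + β n * ell n / n

/-- Window width `w_n = t_n / n`. -/
noncomputable def cutW (β : ℕ → ℝ) (n : ℕ) : ℝ := cutT β n / n

/-- Correction term `r_n = ℓ_n w_n`. -/
noncomputable def cutR (β : ℕ → ℝ) (n : ℕ) : ℝ := ell n * cutW β n

/-! With `s_n = t_n + (1 - β_n) r_n + c w_n` one has `s_n = 1 + δ_n / n`, where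
`δ_n = ℓ_n + c + o(1)`. The first term of `d_n(s_n)` is exactly `e^{-c} e^{-(1 - β_n) ℓ_n}`.
The remaining sum is a Riemann sum, with step `e^{-n}`, of `x ↦ x^{-(1 + δ_n / n)}` over
`[e^n, e^n + 9^n e^{-n}]`. Comparing it with the integral squeezes it between
`n e^{-δ_n} / δ_n · (1 + o(1)) - O(n e^{-(log 9 - 1) δ_n} / δ_n)` and `n e^{-δ_n} / δ_n`.
Since `n e^{-ℓ_n} = log n ∼ δ_n`, both bounds tend to `e^{-c}`; the error term vanishes because
`log 9 - 1 > 1`. -/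

lemma tendsto_exp_neg_of_tendsto_ofReal {α : Type*} {l : Filter α} {x : α → ℝ} {γ : ℝ≥0∞}
    (hx0 : ∀ᶠ a in l, 0 ≤ x a) (hx : Tendsto (fun a => ENNReal.ofReal (x a)) l (𝓝 γ)) :
    Tendsto (fun a => exp (-x a)) l (𝓝 (if γ = ⊤ then 0 else exp (-γ.toReal))) := by
  split_ifs with hγ
  · subst hγ
    refine tendsto_exp_atBot.comp (tendsto_neg_atTop_atBot.comp (tendsto_atTop.2 fun b => ?_))
    filter_upwards [ENNReal.tendsto_nhds_top_iff_nnreal.1 hx b.toNNReal] with a ha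
    exact ((ENNReal.ofReal_lt_ofReal_iff'.1 ha).1).le
  · have hx' : Tendsto x l (𝓝 γ.toReal) :=
      ((ENNReal.tendsto_toReal hγ).comp hx).congr' <| by
        filter_upwards [hx0] with a ha using ENNReal.toReal_ofReal ha
    exact (continuous_exp.tendsto _).comp hx'.neg

lemma tendsto_log_pow_div_comp {α : Type*} {l : Filter α} {f : α → ℝ}
    (hf : Tendsto f l atTop) (k : ℕ) : Tendsto (fun a => log (f a) ^ k / f a) l (𝓝 0) := by
  have h := tendsto_pow_log_div_mul_add_atTop 1 0 k one_ne_zero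
  simp only [one_mul, add_zero] at h
  exact h.comp hf

section RiemannSum

variable {A ε s : ℝ}

lemma integral_affine_rpow_neg (hA : 0 < A) (hε : 0 < ε) (hs : 0 < s) {a b : ℝ}
    (ha : 0 ≤ a) (hb : 0 ≤ b) :
    ∫ u in a..b, ε * (A + u * ε) ^ (-(1 + s)) = ((A + a * ε) ^ (-s) - (A + b * ε) ^ (-s)) / s := by
  have hpos : ∀ u, 0 ≤ u → 0 < A + ε * u := fun u hu => by positivity
  simp_rw [mul_comm _ ε]
  rw [intervalIntegral.integral_const_mul,
    intervalIntegral.integral_comp_add_mul (fun x => x ^ (-(1 + s))) hε.ne',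
    integral_rpow (Or.inr ⟨by linarith, Set.notMem_uIcc_of_lt (hpos a ha) (hpos b hb)⟩),
    smul_eq_mul, ← mul_assoc, mul_inv_cancel₀ hε.ne', one_mul,
    show -(1 + s) + 1 = -s by ring, div_neg, ← neg_div, neg_sub]

lemma antitoneOn_affine_rpow_neg (hA : 0 < A) (hε : 0 < ε) (hs : 0 < s) :
    AntitoneOn (fun u => ε * (A + u * ε) ^ (-(1 + s))) (Set.Ici 0) := by
  intro x hx y _ hxy
  have hx' : 0 < A + x * ε := by have : (0 : ℝ) ≤ x := hx; positivity
  exact mul_le_mul_of_nonneg_left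
    (rpow_le_rpow_of_nonpos hx' (by gcongr) (by linarith)) hε.le

lemma sum_affine_rpow_neg_le (hA : 0 < A) (hε : 0 < ε) (hs : 0 < s) (K : ℕ) :
    ∑ j ∈ Finset.range K, ε * (A + (j + 1) * ε) ^ (-(1 + s)) ≤
      (A ^ (-s) - (A + K * ε) ^ (-s)) / s := by
  have h := ((antitoneOn_affine_rpow_neg hA hε hs).mono (Set.Icc_subset_Ici_self)).sum_le_integral
    (x₀ := 0) (a := K)
  rw [zero_add, integral_affine_rpow_neg hA hε hs le_rfl K.cast_nonneg] at h
  simpa using h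

lemma le_sum_affine_rpow_neg (hA : 0 < A) (hε : 0 < ε) (hs : 0 < s) (K : ℕ) :
    ((A + ε) ^ (-s) - (A + (K + 1) * ε) ^ (-s)) / s ≤
      ∑ j ∈ Finset.range K, ε * (A + (j + 1) * ε) ^ (-(1 + s)) := by
  have h := ((antitoneOn_affine_rpow_neg hA hε hs).mono
    (Set.Icc_subset_Ici_iff (by linarith) |>.2 zero_le_one)).integral_le_sum (x₀ := 1) (a := K)
  rw [integral_affine_rpow_neg hA hε hs zero_le_one (by positivity)] at h
  simpa [add_comm] using h

end RiemannSum

lemma sum_Icc_exp_neg_log_mul_eq {A ε : ℝ} (hA : 0 < A) (hε : 0 ≤ ε) (M : ℕ) (t : ℝ) :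
    ∑ i ∈ Finset.Icc 2 M, ε * exp (-log (A + ((i : ℝ) - 1) * ε) * t) =
      ∑ j ∈ Finset.range (M - 1), ε * (A + (j + 1) * ε) ^ (-t) := by
  rw [← Finset.Ico_add_one_right_eq_Icc, Finset.sum_Ico_eq_sum_range,
    show M + 1 - 2 = M - 1 by omega]
  refine Finset.sum_congr rfl fun j _ => ?_
  rw [rpow_def_of_pos (by positivity)]
  push_cast
  ring_nf

lemma tendsto_log_natCast_atTop : Tendsto (fun n : ℕ => log n) atTop atTop :=
  tendsto_log_atTop.comp tendsto_natCast_atTop_atTop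

lemma log_natCast_pos {n : ℕ} (hn : 2 ≤ n) : 0 < log n :=
  log_pos (by exact_mod_cast hn)

lemma ell_eq {n : ℕ} (hn : 2 ≤ n) : ell n = log n - log (log n) :=
  log_div (by positivity) (log_natCast_pos hn).ne'

lemma exp_ell {n : ℕ} (hn : 2 ≤ n) : exp (ell n) = n / log n :=
  exp_log (div_pos (by positivity) (log_natCast_pos hn))

lemma ell_nonneg {n : ℕ} (hn : 2 ≤ n) : 0 ≤ ell n := by
  refine log_nonneg ((one_le_div (log_natCast_pos hn)).2 ?_)
  linarith [log_le_sub_one_of_pos (x := n) (by positivity)]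

lemma tendsto_ell_div_log : Tendsto (fun n : ℕ => ell n / log n) atTop (𝓝 1) := by
  have hloglog : Tendsto (fun n : ℕ => log (log n) / log n) atTop (𝓝 0) := by
    simpa using tendsto_log_pow_div_comp tendsto_log_natCast_atTop 1
  refine (by simpa using hloglog.const_sub 1 : Tendsto _ atTop (𝓝 (1 : ℝ))).congr' ?_
  filter_upwards [eventually_ge_atTop 2] with n hn
  rw [ell_eq hn, sub_div, div_self (log_natCast_pos hn).ne']

lemma tendsto_ell_pow_div_natCast (k : ℕ) :
    Tendsto (fun n : ℕ => ell n ^ k / n) atTop (𝓝 0) := by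
  have h := (tendsto_ell_div_log.pow k).mul (tendsto_log_pow_div_comp tendsto_natCast_atTop_atTop k)
  rw [one_pow, one_mul] at h
  refine h.congr' ?_
  filter_upwards [eventually_ge_atTop 2] with n hn
  rw [div_pow, div_mul_div_cancel₀ (pow_ne_zero k (log_natCast_pos hn).ne')]

section Excess

variable {δ : ℕ → ℝ} {c : ℝ}

lemma tendsto_div_log_of_sub_ell (hδ : Tendsto (fun n => δ n - ell n) atTop (𝓝 c)) :
    Tendsto (fun n : ℕ => δ n / log n) atTop (𝓝 1) := by
  have h := tendsto_ell_div_log.add (hδ.div_atTop tendsto_log_natCast_atTop)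
  rw [add_zero] at h
  exact h.congr fun n => by rw [← add_div, add_sub_cancel]

lemma tendsto_atTop_of_sub_ell (hδ : Tendsto (fun n => δ n - ell n) atTop (𝓝 c)) :
    Tendsto δ atTop atTop := by
  refine ((tendsto_div_log_of_sub_ell hδ).pos_mul_atTop one_pos tendsto_log_natCast_atTop).congr' ?_
  filter_upwards [eventually_ge_atTop 2] with n hn
  exact div_mul_cancel₀ _ (log_natCast_pos hn).ne'

lemma tendsto_div_natCast_of_sub_ell (hδ : Tendsto (fun n => δ n - ell n) atTop (𝓝 c)) :
    Tendsto (fun n : ℕ => δ n / n) atTop (𝓝 0) := by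
  have h := (tendsto_div_log_of_sub_ell hδ).mul
    (tendsto_log_pow_div_comp tendsto_natCast_atTop_atTop 1)
  rw [one_mul] at h
  refine h.congr' ?_
  filter_upwards [eventually_ge_atTop 2] with n hn
  rw [pow_one, div_mul_div_cancel₀ (log_natCast_pos hn).ne']

lemma tendsto_mul_exp_neg_div_of_sub_ell (hδ : Tendsto (fun n => δ n - ell n) atTop (𝓝 c)) :
    Tendsto (fun n : ℕ => n * exp (-δ n) / δ n) atTop (𝓝 (exp (-c))) := by
  have h := ((continuous_exp.tendsto _).comp hδ.neg).mul
    ((tendsto_div_log_of_sub_ell hδ).inv₀ one_ne_zero)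
  rw [inv_one, mul_one] at h
  refine h.congr' ?_
  filter_upwards [eventually_ge_atTop 2] with n hn
  have hlog := (log_natCast_pos hn).ne'
  simp only [Function.comp_apply, neg_sub, exp_sub, exp_ell hn, exp_neg]
  field_simp

lemma tendsto_mul_exp_neg_mul_div_of_sub_ell (hδ : Tendsto (fun n => δ n - ell n) atTop (𝓝 c))
    {q : ℝ} (hq : 1 < q) :
    Tendsto (fun n : ℕ => n * exp (-(q * δ n)) / δ n) atTop (𝓝 0) := by
  have hexp : Tendsto (fun n => exp (-((q - 1) * δ n))) atTop (𝓝 0) :=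
    tendsto_exp_atBot.comp <| tendsto_neg_atTop_atBot.comp <|
      (tendsto_atTop_of_sub_ell hδ).const_mul_atTop (sub_pos.2 hq)
  have h := (tendsto_mul_exp_neg_div_of_sub_ell hδ).mul hexp
  rw [mul_zero] at h
  refine h.congr fun n => ?_
  rw [mul_div_right_comm, mul_assoc, ← exp_add, mul_div_right_comm]
  ring_nf

lemma tendsto_rpow_neg_div_of_sub_ell (hδ : Tendsto (fun n => δ n - ell n) atTop (𝓝 c))
    {x : ℕ → ℝ} (hx : ∀ᶠ n in atTop, 0 < x n)
    (hlog : Tendsto (fun n => log (x n) - n) atTop (𝓝 0)) :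
    Tendsto (fun n : ℕ => x n ^ (-(δ n / n)) / (δ n / n)) atTop (𝓝 (exp (-c))) := by
  have h := (tendsto_mul_exp_neg_div_of_sub_ell hδ).mul
    ((continuous_exp.tendsto _).comp (hlog.mul (tendsto_div_natCast_of_sub_ell hδ)).neg)
  rw [zero_mul, neg_zero, exp_zero, mul_one] at h
  refine h.congr' ?_
  filter_upwards [hx, (tendsto_atTop_of_sub_ell hδ).eventually_gt_atTop 0,
    eventually_gt_atTop 0] with n hxn hδn hn
  have hn' : (n : ℝ) ≠ 0 := by positivity
  rw [Function.comp_apply, rpow_def_of_pos hxn,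
    show log (x n) * -(δ n / n) = -δ n + -((log (x n) - n) * (δ n / n)) by field_simp; ring,
    exp_add]
  field_simp

lemma tendsto_rpow_neg_div_of_exp_mul_le (hδ : Tendsto (fun n => δ n - ell n) atTop (𝓝 c))
    {q : ℝ} (hq : 1 < q) {x : ℕ → ℝ} (hx : ∀ᶠ n : ℕ in atTop, exp (q * n) ≤ x n) :
    Tendsto (fun n : ℕ => x n ^ (-(δ n / n)) / (δ n / n)) atTop (𝓝 0) := by
  have hpos : ∀ᶠ n : ℕ in atTop, 0 < δ n ∧ 0 < (n : ℝ) :=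
    ((tendsto_atTop_of_sub_ell hδ).eventually_gt_atTop 0).and
      (tendsto_natCast_atTop_atTop.eventually_gt_atTop 0)
  refine squeeze_zero' ?_ ?_ (tendsto_mul_exp_neg_mul_div_of_sub_ell hδ hq)
  · filter_upwards [hx, hpos] with n hxn ⟨hδn, hn⟩
    have : 0 ≤ x n := (exp_pos _).le.trans hxn
    positivity
  · filter_upwards [hx, hpos] with n hxn ⟨hδn, hn⟩
    calc x n ^ (-(δ n / n)) / (δ n / n)
        ≤ exp (q * n) ^ (-(δ n / n)) / (δ n / n) :=
          div_le_div_of_nonneg_right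
            (rpow_le_rpow_of_nonpos (exp_pos _) hxn (neg_nonpos.2 (by positivity))) (by positivity)
      _ = n * exp (-(q * δ n)) / δ n := by
          rw [← exp_mul, show q * n * -(δ n / n) = -(q * δ n) by field_simp]
          field_simp

lemma one_lt_log_nine_sub_one : 1 < log 9 - 1 := by
  have h : exp 2 < 9 := by
    rw [show (2 : ℝ) = 1 + 1 by norm_num, exp_add]
    nlinarith [exp_one_lt_d9, exp_pos 1]
  linarith [(lt_log_iff_exp_lt (by norm_num)).2 h]

lemma tendsto_sum_rpow_of_sub_ell (hδ : Tendsto (fun n => δ n - ell n) atTop (𝓝 c)) :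
    Tendsto (fun n : ℕ => ∑ j ∈ Finset.range (9 ^ n - 1),
      exp (-n) * (exp n + (j + 1) * exp (-n)) ^ (-(1 + δ n / n))) atTop (𝓝 (exp (-c))) := by
  have hpos : ∀ᶠ n : ℕ in atTop, 0 < δ n / n := by
    filter_upwards [(tendsto_atTop_of_sub_ell hδ).eventually_gt_atTop 0,
      eventually_gt_atTop 0] with n hδn hn
    positivity
  have hupper := tendsto_rpow_neg_div_of_sub_ell hδ (x := fun n => exp n)
    (Eventually.of_forall fun n => exp_pos _) (by simp)
  have hshift : Tendsto (fun n : ℕ => log (exp n + exp (-n)) - n) atTop (𝓝 0) := by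
    have hsmall : Tendsto (fun n : ℕ => 1 + exp (-(2 * n))) atTop (𝓝 1) := by
      simpa using (tendsto_exp_neg_atTop_nhds_zero.comp
        (tendsto_natCast_atTop_atTop.const_mul_atTop two_pos)).const_add 1
    have hlog := (continuousAt_log one_ne_zero).tendsto.comp hsmall
    rw [log_one] at hlog
    refine hlog.congr fun n => ?_
    have hfactor : exp n + exp (-n) = exp n * (1 + exp (-(2 * n))) := by
      rw [mul_add, mul_one, ← exp_add]
      ring_nf
    rw [Function.comp_apply, hfactor, log_mul (exp_pos _).ne' (by positivity), log_exp]
    ring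
  have hfar (n : ℕ) :
      exp ((log 9 - 1) * n) ≤ exp n + (((9 ^ n - 1 : ℕ) : ℝ) + 1) * exp (-n) := by
    have h9 : ((9 ^ n - 1 : ℕ) : ℝ) + 1 = 9 ^ n := by
      rw [Nat.cast_sub (Nat.one_le_pow _ _ (by norm_num))]
      push_cast
      ring
    rw [h9, sub_mul, one_mul, exp_sub, mul_comm, exp_nat_mul, exp_log (by norm_num),
      div_eq_mul_inv, ← exp_neg]
    linarith [exp_pos n]
  have hlower := (tendsto_rpow_neg_div_of_sub_ell hδ (x := fun n => exp n + exp (-n))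
    (Eventually.of_forall fun n => by positivity) hshift).sub
    (tendsto_rpow_neg_div_of_exp_mul_le hδ one_lt_log_nine_sub_one (Eventually.of_forall hfar))
  rw [sub_zero] at hlower
  refine tendsto_of_tendsto_of_tendsto_of_le_of_le' hlower hupper ?_ ?_
  · filter_upwards [hpos] with n hn
    rw [← sub_div]
    simpa using le_sum_affine_rpow_neg (exp_pos n) (exp_pos (-n)) hn (9 ^ n - 1)
  · filter_upwards [hpos] with n hn
    refine (sum_affine_rpow_neg_le (exp_pos n) (exp_pos (-n)) hn _).trans ?_
    rw [sub_div]
    exact sub_le_self _ (div_nonneg (rpow_nonneg (by positivity) _) hn.le)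

end Excess

noncomputable def cutDelta (β : ℕ → ℝ) (c : ℝ) (n : ℕ) : ℝ :=
  ell n + c + β n * ell n * ((1 - β n) * ell n + c) / n

lemma cutT_add_eq (β : ℕ → ℝ) (c : ℝ) (n : ℕ) :
    cutT β n + (1 - β n) * cutR β n + c * cutW β n =
      cutT β n * (1 + ((1 - β n) * ell n + c) / n) := by
  simp only [cutR, cutW]
  ring

lemma cutT_mul_eq (β : ℕ → ℝ) (c : ℝ) (n : ℕ) :
    cutT β n * (1 + ((1 - β n) * ell n + c) / n) = 1 + cutDelta β c n / n := by
  simp only [cutT, cutDelta]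
  ring

lemma dCut_cutT_add_eq {β : ℕ → ℝ} {n : ℕ} (hβ : 0 ≤ β n) (hn : 2 ≤ n) (c : ℝ) :
    dCut β n (cutT β n + (1 - β n) * cutR β n + c * cutW β n) =
      exp (-c) * exp (-((1 - β n) * ell n)) +
        ∑ j ∈ Finset.range (9 ^ n - 1),
          exp (-n) * (exp n + (j + 1) * exp (-n)) ^ (-(1 + cutDelta β c n / n)) := by
  have hn' : (n : ℝ) ≠ 0 := by positivity
  have hT : 1 + β n / n * ell n ≠ 0 := by
    have hℓ := ell_nonneg hn
    positivity
  rw [dCut, sum_Icc_exp_neg_log_mul_eq (exp_pos _) (exp_pos _).le, cutT_add_eq,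
    ← cutT_mul_eq β c n, cutT, ← exp_add, ← exp_add,
    show 1 + β n * ell n / n = 1 + β n / n * ell n by ring, ← mul_assoc, neg_mul,
    div_mul_cancel₀ _ hT]
  congr 2
  field_simp
  ring

lemma tendsto_cutDelta_sub_ell {β : ℕ → ℝ} (hβ : ∀ n, β n ∈ Set.Icc (0 : ℝ) 1) (c : ℝ) :
    Tendsto (fun n => cutDelta β c n - ell n) atTop (𝓝 c) := by
  have hbound : ∀ᶠ n : ℕ in atTop, ‖β n * ell n * ((1 - β n) * ell n + c) / n‖ ≤
      ell n ^ 2 / n + |c| * (ell n / n) := by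
    filter_upwards [eventually_ge_atTop 2] with n hn
    obtain ⟨hβ0, hβ1⟩ := hβ n
    have hℓ := ell_nonneg hn
    have hsplit : β n * ell n * ((1 - β n) * ell n + c) / n =
        β n * (1 - β n) * (ell n ^ 2 / n) + β n * c * (ell n / n) := by ring
    have ha : 0 ≤ ell n ^ 2 / n := by positivity
    have hb : 0 ≤ ell n / n := by positivity
    rw [hsplit, Real.norm_eq_abs]
    refine (abs_add_le _ _).trans (add_le_add ?_ ?_)
    · rw [abs_of_nonneg (by positivity)]
      exact mul_le_of_le_one_left ha (by nlinarith)
    · rw [abs_mul, abs_mul, abs_of_nonneg hβ0, abs_of_nonneg hb, mul_assoc]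
      exact mul_le_of_le_one_left (by positivity) hβ1
  have hℓ : Tendsto (fun n : ℕ => ell n / n) atTop (𝓝 0) := by
    simpa using tendsto_ell_pow_div_natCast 1
  have hE := squeeze_zero_norm' hbound (by
    simpa using (tendsto_ell_pow_div_natCast 2).add (hℓ.const_mul |c|))
  simpa [cutDelta, add_sub_cancel_left, add_assoc] using hE.const_add c

/-- Lemma 1 of Barrera–Ycart: if `γ = lim (1-β_n) ℓ_n` exists in `[0, ∞]`, then
for every real `c`, `d_n(t_n + (1-β_n) r_n + c w_n) → e^{-c} (1 + e^{-γ})`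
(with the convention `e^{-∞} = 0`). -/
theorem lemma_betan
    (β : ℕ → ℝ) (hβ : ∀ n, β n ∈ Set.Icc (0 : ℝ) 1)
    (γ : ℝ≥0∞)
    (hγ : Tendsto (fun n => ENNReal.ofReal ((1 - β n) * ell n)) atTop (𝓝 γ))
    (c : ℝ) :
    Tendsto (fun n => dCut β n (cutT β n + (1 - β n) * cutR β n + c * cutW β n))
      atTop
      (𝓝 (Real.exp (-c) * (1 + if γ = ⊤ then 0 else Real.exp (-γ.toReal)))) := by
  have hnonneg : ∀ᶠ n in atTop, 0 ≤ (1 - β n) * ell n := by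
    filter_upwards [eventually_ge_atTop 2] with n hn
    exact mul_nonneg (sub_nonneg.2 (hβ n).2) (ell_nonneg hn)
  have hlim := ((tendsto_exp_neg_of_tendsto_ofReal hnonneg hγ).const_mul (exp (-c))).add
    (tendsto_sum_rpow_of_sub_ell (tendsto_cutDelta_sub_ell hβ c))
  rw [mul_one_add, add_comm]
  refine hlim.congr' ?_
  filter_upwards [eventually_ge_atTop 2] with n hn
  exact (dCut_cutT_add_eq (hβ n).1 hn c).symm
end
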